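/- arXiv:2112.03725 — 7 statements merged into one kernel-verified Lean document; each statement's English description precedes it below -/
import Mathlib

section
/- Let D(r,s) be the covariance double contour integral (see context). For all integers r ≥ s ≥ 1 with r ≥ 2 one has (r−1)·D(r−1,s) + (s−1)·D(r,s−1) − (r+s)·D(r,s) = 0, where in the case s = 1 the term (s−1)·D(r,s−1) is interpreted as 0. -/
/-!
Computing the inner integral by residues at `w = 0` (the pole `w = z` lies outside `C(0, ρ)`) and
then the outer one at `z = 0`, with `∮ e^z (1 - z/a) z^(-n-1) dz = 2πi (1 - n/a) / n!`, gives
`D(r,s) = (r-1)! (s-1)! ∑_{k+m=s} m² / (k! (r+m)!)`.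
In this form the recurrence is termwise: shifting `k` by one in the sum for `D(r, s-1)` and using
`(r + m) + k = r + s` combines the three sums into one.
-/

open MeasureTheory Filter Finset

/-- The covariance double contour integral `D(r,s)` of slowed `t`-TASEP:
`D(r,s) = (1/(4π²)) ∮_{|z|=R} ∮_{|w|=ρ} (w/(z−w)) (r!s!/(z^r w^s)) e^{z+w} (1−z/r)(1−w/s) (dz/z)(dw/w)`,
with both circles centered at the origin, traversed counterclockwise, and the inner
integral in `w` performed first. -/
noncomputable def covD (r s : ℕ) (R ρ : ℝ) : ℂ :=
  (1 / (4 * (Real.pi : ℂ) ^ 2)) *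
    ∮ z in C(0, R),
      (∮ w in C(0, ρ),
        w / (z - w) * ((r.factorial : ℂ) * (s.factorial : ℂ) / (z ^ r * w ^ s)) *
          Complex.exp (z + w) * (1 - z / (r : ℂ)) * (1 - w / (s : ℂ)) / w) / z

open Complex Metric
open scoped Nat Real

theorem iteratedDeriv_exp_mul_one_sub_div (a : ℂ) (n : ℕ) :
    iteratedDeriv n (fun w => exp w * (1 - w / a)) = fun w => exp w * (1 - (w + n) / a) := by
  induction n with
  | zero => simp
  | succ n ih =>
    ext w
    have h : HasDerivAt (fun w => exp w * (1 - (w + n) / a))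
        (exp w * (1 - (w + n) / a) + exp w * -(1 / a)) w :=
      (hasDerivAt_exp w).mul (((hasDerivAt_id' w).add_const _).div_const a |>.const_sub 1)
    rw [iteratedDeriv_succ, ih, h.deriv]
    push_cast
    ring

theorem circleIntegral_exp_mul_one_sub_div_div_pow_succ {R : ℝ} (hR : 0 < R) (a : ℂ) (n : ℕ) :
    ∮ z in C(0, R), exp z * (1 - z / a) / z ^ (n + 1) = 2 * π * I * (1 - n / a) / n ! := by
  have h := (show Differentiable ℂ fun w => exp w * (1 - w / a) by fun_prop).differentiableOn
    |>.circleIntegral_one_div_sub_center_pow_smul (c := 0) hR n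
  simp only [iteratedDeriv_exp_mul_one_sub_div, sub_zero, smul_eq_mul, exp_zero, zero_add] at h
  convert h using 1
  · congr 1; ext z
    ring
  · ring

section PartialFractions

variable {g : ℂ → ℂ} {ρ : ℝ} {z : ℂ}

theorem circleIntegral_div_sub_eq_zero (hg : DifferentiableOn ℂ g (closedBall 0 ρ))
    (hρ : 0 ≤ ρ) (hz : ρ < ‖z‖) : ∮ w in C(0, ρ), g w / (z - w) = 0 := by
  have hne : ∀ w ∈ closedBall (0 : ℂ) ρ, z - w ≠ 0 := fun w hw h => by
    rw [mem_closedBall_zero_iff, ← sub_eq_zero.mp h] at hw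
    linarith
  exact DiffContOnCl.circleIntegral_eq_zero hρ <|
    ((hg.div (differentiableOn_const z |>.sub differentiableOn_id) hne).mono
      closure_ball_subset_closedBall).diffContOnCl

/-- Expanding `1 / (z - w)` in powers of `w / z`, only the principal part at `w = 0` survives. -/
theorem circleIntegral_div_pow_succ_mul_sub (hg : DifferentiableOn ℂ g (closedBall 0 ρ))
    (hρ : 0 < ρ) (hz : ρ < ‖z‖) (n : ℕ) :
    ∮ w in C(0, ρ), g w / (w ^ (n + 1) * (z - w)) =
      ∑ p ∈ antidiagonal n, (∮ w in C(0, ρ), g w / w ^ (p.1 + 1)) / z ^ (p.2 + 1) := by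
  have hz0 : z ≠ 0 := norm_pos_iff.mp (hρ.trans hz)
  have hw0 : ∀ w ∈ sphere (0 : ℂ) ρ, w ≠ 0 := fun w hw =>
    ne_zero_of_mem_sphere hρ.ne' ⟨w, hw⟩
  have hzw : ∀ w ∈ sphere (0 : ℂ) ρ, z - w ≠ 0 := fun w hw h => by
    rw [mem_sphere_zero_iff_norm, ← sub_eq_zero.mp h] at hw
    linarith
  have hgc : ContinuousOn g (sphere 0 ρ) := hg.continuousOn.mono sphere_subset_closedBall
  have step (k : ℕ) : ∮ w in C(0, ρ), g w / (w ^ (k + 1) * (z - w)) =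
      z⁻¹ * ((∮ w in C(0, ρ), g w / w ^ (k + 1)) +
        ∮ w in C(0, ρ), g w / (w ^ k * (z - w))) := by
    rw [← circleIntegral.integral_add, ← circleIntegral.integral_const_mul]
    · refine circleIntegral.integral_congr hρ.le fun w hw => ?_
      have := hw0 w hw
      have := hzw w hw
      field_simp
      ring
    · exact (hgc.div (continuousOn_pow _) fun w hw => pow_ne_zero _ (hw0 w hw)).circleIntegrable
        hρ.le
    · exact (hgc.div ((continuousOn_pow _).mul (continuousOn_const.sub continuousOn_id))
        fun w hw => mul_ne_zero (pow_ne_zero _ (hw0 w hw)) (hzw w hw)).circleIntegrable hρ.le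
  induction n with
  | zero =>
    simp only [step, pow_zero, one_mul, circleIntegral_div_sub_eq_zero hg hρ.le hz]
    simp [div_eq_inv_mul]
  | succ n ih =>
    rw [step, ih, Nat.sum_antidiagonal_succ', mul_add, Finset.mul_sum]
    simp only [div_eq_inv_mul, pow_succ]
    ring_nf

end PartialFractions

theorem covD_integrand_eq_mul (r s : ℕ) {z w : ℂ} (hw : w ≠ 0) :
    w / (z - w) * ((r ! : ℂ) * (s ! : ℂ) / (z ^ r * w ^ s)) * exp (z + w) * (1 - z / r) *
        (1 - w / s) / w =
      r ! * s ! * exp z * (1 - z / r) / z ^ r * (exp w * (1 - w / s) / (w ^ s * (z - w))) := by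
  rw [exp_add]
  field_simp

theorem covD_succ_eq_sum (r b : ℕ) {ρ R : ℝ} (hρ : 0 < ρ) (hρR : ρ < R) :
    covD r (b + 1) R ρ = -(r ! * (b + 1)! *
      ∑ p ∈ antidiagonal b, (1 - p.1 / (b + 1 : ℂ)) / p.1 ! *
        ((1 - (r + p.2 + 1 : ℕ) / (r : ℂ)) / (r + p.2 + 1)!)) := by
  have hR : 0 < R := hρ.trans hρR
  have outer_integrand : ∀ z ∈ sphere (0 : ℂ) R, (∮ w in C(0, ρ),
      w / (z - w) * ((r ! : ℂ) * ((b + 1)! : ℂ) / (z ^ r * w ^ (b + 1))) * exp (z + w) *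
        (1 - z / r) * (1 - w / (b + 1 : ℕ)) / w) / z =
      ∑ p ∈ antidiagonal b, 2 * π * I * r ! * (b + 1)! * ((1 - p.1 / (b + 1 : ℂ)) / p.1 !) *
        (exp z * (1 - z / r) / z ^ (r + p.2 + 1 + 1)) := by
    intro z hz
    have hzR : ‖z‖ = R := mem_sphere_zero_iff_norm.mp hz
    rw [circleIntegral.integral_congr hρ.le fun w hw =>
      covD_integrand_eq_mul r (b + 1) (ne_zero_of_mem_sphere hρ.ne' ⟨w, hw⟩),
      circleIntegral.integral_const_mul,
      circleIntegral_div_pow_succ_mul_sub (by fun_prop) hρ (hzR ▸ hρR)]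
    simp only [circleIntegral_exp_mul_one_sub_div_div_pow_succ hρ, Finset.mul_sum, Finset.sum_div]
    refine Finset.sum_congr rfl fun p _ => ?_
    push_cast
    field_simp
    ring
  rw [covD, circleIntegral.integral_congr hR.le outer_integrand, circleIntegral.integral_fun_sum]
  · simp only [circleIntegral.integral_const_mul,
      circleIntegral_exp_mul_one_sub_div_div_pow_succ hR]
    rw [Finset.mul_sum, Finset.mul_sum, ← Finset.sum_neg_distrib]
    refine Finset.sum_congr rfl fun p _ => ?_
    field_simp
    rw [I_sq]
    ring
  · intro p _
    refine ContinuousOn.circleIntegrable hR.le <| continuousOn_const.mul <|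
      ContinuousOn.div (by fun_prop) (continuousOn_pow _) fun z hz => ?_
    exact pow_ne_zero _ (ne_zero_of_mem_sphere hR.ne' ⟨z, hz⟩)

noncomputable def covSum (r s : ℕ) : ℂ :=
  ∑ p ∈ antidiagonal s, (p.2 : ℂ) ^ 2 / (p.1 ! * (r + p.2)!)

theorem covSum_add_covSum_succ (r s : ℕ) :
    covSum r (s + 1) + covSum (r + 1) s = (r + s + 2) * covSum (r + 1) (s + 1) := by
  have shift : covSum (r + 1) s =
      ∑ p ∈ antidiagonal (s + 1), (p.1 * p.2 ^ 2 : ℂ) / (p.1 ! * (r + 1 + p.2)!) := by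
    rw [Nat.sum_antidiagonal_succ, covSum]
    simp only [CharP.cast_eq_zero, zero_mul, zero_div, zero_add]
    refine Finset.sum_congr rfl fun p _ => ?_
    rw [Nat.factorial_succ]
    push_cast
    field_simp
  rw [shift, covSum, covSum, ← Finset.sum_add_distrib, Finset.mul_sum]
  refine Finset.sum_congr rfl fun ⟨k, m⟩ hkm => ?_
  have hs : (s : ℂ) + 1 = k + m := by exact_mod_cast (mem_antidiagonal.mp hkm).symm
  have hk : (k ! : ℂ) ≠ 0 := Nat.cast_ne_zero.mpr k.factorial_ne_zero
  have hrm : ((r + m)! : ℂ) ≠ 0 := Nat.cast_ne_zero.mpr (r + m).factorial_ne_zero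
  have hrm1 : (r + m + 1 : ℂ) ≠ 0 := by norm_cast
  rw [show r + 1 + m = r + m + 1 by ring, Nat.factorial_succ]
  push_cast
  field_simp
  linear_combination -(m : ℂ) ^ 2 * hs

theorem mul_covD_eq_covSum {r : ℕ} (hr : r ≠ 0) (s : ℕ) {ρ R : ℝ} (hρ : 0 < ρ)
    (hρR : ρ < R) :
    (r * s : ℂ) * covD r s R ρ = r ! * s ! * covSum r s := by
  cases s with
  | zero => simp [covSum]
  | succ b =>
    rw [covD_succ_eq_sum r b hρ hρR, covSum, Nat.sum_antidiagonal_succ']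
    simp only [CharP.cast_eq_zero, zero_pow two_ne_zero, zero_div, zero_add, Finset.mul_sum,
      mul_neg, ← Finset.sum_neg_distrib]
    refine Finset.sum_congr rfl fun ⟨k, m⟩ hkm => ?_
    have hb : (b : ℂ) = k + m := by exact_mod_cast (mem_antidiagonal.mp hkm).symm
    rw [show r + m + 1 = r + (m + 1) by ring]
    push_cast
    field_simp
    rw [hb]
    ring

theorem covD_recurrence_general (r s : ℕ) (hs : 1 ≤ s) (hr : 2 ≤ r)
    (ρ R : ℝ) (hρ : 0 < ρ) (hρR : ρ < R) :
    ((r : ℂ) - 1) * covD (r - 1) s R ρ + ((s : ℂ) - 1) * covD r (s - 1) R ρ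
      - ((r : ℂ) + (s : ℂ)) * covD r s R ρ = 0 := by
  obtain ⟨a, rfl⟩ : ∃ a, r = a + 2 := ⟨r - 2, by omega⟩
  obtain ⟨b, rfl⟩ : ∃ b, s = b + 1 := ⟨s - 1, by omega⟩
  have h1 := mul_covD_eq_covSum a.succ_ne_zero (b + 1) hρ hρR
  have h2 := mul_covD_eq_covSum (a + 1).succ_ne_zero b hρ hρR
  have h3 := mul_covD_eq_covSum (a + 1).succ_ne_zero (b + 1) hρ hρR
  have h4 := covSum_add_covSum_succ (a + 1) b
  have fa : ((a + 2)! : ℂ) = (a + 2) * (a + 1)! := by push_cast [Nat.factorial_succ]; ring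
  have fb : ((b + 1)! : ℂ) = (b + 1) * b ! := by push_cast [Nat.factorial_succ]; ring
  have hne : ((a + 2 : ℂ) * (b + 1)) ≠ 0 := by
    exact_mod_cast (Nat.mul_ne_zero (a + 1).succ_ne_zero b.succ_ne_zero)
  rw [show a + 2 - 1 = a + 1 by omega, add_tsub_cancel_right, ← mul_right_inj' hne, mul_zero]
  push_cast at h1 h2 h3 h4 ⊢
  simp only [fa, fb] at h1 h2 h3
  linear_combination (a + 2 : ℂ) * h1 + (b + 1 : ℂ) * h2 - (a + b + 3 : ℂ) * h3 +
    ((a + 2) * (a + 1)! * ((b + 1) * b !) : ℂ) * h4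

/-- For integers `r ≥ s ≥ 1` with `r ≥ 2`,
`(r−1)·D(r−1,s) + (s−1)·D(r,s−1) − (r+s)·D(r,s) = 0`
(when `s = 1` the middle term vanishes since its coefficient is `0`). -/
theorem covD_recurrence (r s : ℕ) (hs : 1 ≤ s) (hsr : s ≤ r) (hr : 2 ≤ r)
    (ρ R : ℝ) (hρ : 0 < ρ) (hρR : ρ < R) :
    ((r : ℂ) - 1) * covD (r - 1) s R ρ + ((s : ℂ) - 1) * covD r (s - 1) R ρ
      - ((r : ℂ) + (s : ℂ)) * covD r s R ρ = 0 :=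
  covD_recurrence_general r s hs hr ρ R hρ hρR
end

section
/- For every real number c ≥ 0, the absolutely convergent double integral over ℝ² satisfies (1/(2π)) ∫_ℝ ∫_ℝ ( u·(v+i) / (1 + c + iu − iv) ) · e^{−u²/2 − (v+i)²/2} du dv = ∫_0^∞ y² e^{−y² − cy} dy, where the left-hand side is a complex-valued Lebesgue integral, i is the imaginary unit, and the equality is in ℂ (the right-hand side being a positive real number). -/
/-!
Write `1 / (1 + c + i(u - v)) = ∫₀^∞ e^{-(1+c)t} e^{-i(u-v)t} dt` and swap the order of
integration, everything being dominated by `|f u| |g v| e^{-(1+c)t}` for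
`f u = u e^{-u²/2}` and `g v = (v + i) e^{-(v+i)²/2}`. The double integral becomes
`∫₀^∞ e^{-(1+c)t} f̂(t) ǧ(t) dt`, where `f̂(t) = ∫ f(u) e^{-itu} du = -it √(2π) e^{-t²/2}` and
`ǧ(t) = ∫ g(v) e^{itv} dv = it √(2π) e^{t-t²/2}` are first moments of complex Gaussians, and
the integrand is `2π t² e^{-t²-ct}`.
-/

open MeasureTheory Complex Set

/-- `|x| ≤ eˣ + e⁻ˣ` dominates the integrand by two Gaussians with shifted linear terms. -/
theorem integrable_mul_cexp_quadratic {b : ℂ} (hb : b.re < 0) (c d : ℂ) :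
    Integrable fun x : ℝ => x * cexp (b * x ^ 2 + c * x + d) := by
  refine ((integrable_cexp_quadratic' hb (c + 1) d).norm.add
    (integrable_cexp_quadratic' hb (c - 1) d).norm).mono' (by fun_prop) (ae_of_all _ fun x => ?_)
  have habs : |x| ≤ Real.exp x + Real.exp (-x) := by
    rcases abs_cases x with ⟨h, -⟩ | ⟨h, -⟩ <;> rw [h]
    · linarith [Real.add_one_le_exp x, Real.exp_pos (-x)]
    · linarith [Real.add_one_le_exp (-x), Real.exp_pos x]
  have hshift (s : ℝ) : cexp (b * x ^ 2 + (c + s) * x + d) =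
      cexp (b * x ^ 2 + c * x + d) * cexp ↑(s * x) := by
    rw [← Complex.exp_add]; push_cast; ring_nf
  rw [Pi.add_apply, ← ofReal_one, hshift, sub_eq_add_neg, ← ofReal_neg, hshift]
  simp only [norm_mul, norm_real, Real.norm_eq_abs, norm_exp, ofReal_re, one_mul, neg_one_mul]
  nlinarith [Real.exp_pos (b * x ^ 2 + c * x + d).re]

/-- The derivative `(2bx + c) e^{bx² + cx + d}` of the Gaussian integrates to zero. -/
theorem integral_mul_cexp_quadratic {b : ℂ} (hb : b.re < 0) (c d : ℂ) :
    ∫ x : ℝ, x * cexp (b * x ^ 2 + c * x + d) =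
      -c / (2 * b) * ((Real.pi / -b) ^ (1 / 2 : ℂ) * cexp (d - c ^ 2 / (4 * b))) := by
  have hb0 : b ≠ 0 := by rintro rfl; simp at hb
  have hderiv (x : ℝ) : HasDerivAt (fun x : ℝ => cexp (b * x ^ 2 + c * x + d))
      (2 * b * (x * cexp (b * x ^ 2 + c * x + d)) + c * cexp (b * x ^ 2 + c * x + d)) x := by
    convert ((((hasDerivAt_pow 2 (x : ℂ)).const_mul b).fun_add
      ((hasDerivAt_id' (x : ℂ)).const_mul c)).add_const d).cexp.comp_ofReal using 1
    push_cast; ring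
  have hint := integrable_mul_cexp_quadratic hb c d
  have hint' := integrable_cexp_quadratic' hb c d
  have hzero := integral_eq_zero_of_hasDerivAt_of_integrable hderiv
    ((hint.const_mul (2 * b)).add (hint'.const_mul c)) hint'
  rw [integral_add (hint.const_mul _) (hint'.const_mul c), integral_const_mul, integral_const_mul,
    integral_cexp_quadratic hb] at hzero
  rw [div_mul_eq_mul_div, eq_div_iff (mul_ne_zero two_ne_zero hb0)]
  linear_combination hzero

theorem integral_mul_cexp_neg_sq_div_two_add (s : ℂ) :
    ∫ x : ℝ, x * cexp (-x ^ 2 / 2 + s * x) =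
      s * ((2 * Real.pi) ^ (1 / 2 : ℂ) * cexp (s ^ 2 / 2)) := by
  have hexp (x : ℝ) : -(x : ℂ) ^ 2 / 2 + s * x = -1 / 2 * x ^ 2 + s * x + 0 := by ring
  simp_rw [hexp]
  rw [integral_mul_cexp_quadratic (by norm_num)]
  ring_nf

theorem add_I_mul_cexp_neg_add_I_sq_div_two_add (x s : ℂ) :
    (x + I) * cexp (-(x + I) ^ 2 / 2 + s * x) =
      x * cexp (-1 / 2 * x ^ 2 + (s - I) * x + 1 / 2) +
        I * cexp (-1 / 2 * x ^ 2 + (s - I) * x + 1 / 2) := by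
  rw [← add_mul]; congr 2
  linear_combination (-1 / 2 : ℂ) * I_sq

theorem integrable_add_I_mul_cexp_neg_add_I_sq_div_two_add (s : ℂ) :
    Integrable fun x : ℝ => (x + I) * cexp (-(x + I) ^ 2 / 2 + s * x) := by
  have hb : (-1 / 2 : ℂ).re < 0 := by norm_num
  simp_rw [add_I_mul_cexp_neg_add_I_sq_div_two_add]
  exact (integrable_mul_cexp_quadratic hb _ _).add ((integrable_cexp_quadratic' hb _ _).const_mul I)

theorem integral_add_I_mul_cexp_neg_add_I_sq_div_two_add (s : ℂ) :
    ∫ x : ℝ, (x + I) * cexp (-(x + I) ^ 2 / 2 + s * x) =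
      s * ((2 * Real.pi) ^ (1 / 2 : ℂ) * cexp (s ^ 2 / 2 - I * s)) := by
  have hb : (-1 / 2 : ℂ).re < 0 := by norm_num
  simp_rw [add_I_mul_cexp_neg_add_I_sq_div_two_add]
  rw [integral_add (integrable_mul_cexp_quadratic hb _ _)
      ((integrable_cexp_quadratic' hb _ _).const_mul I), integral_const_mul,
    integral_mul_cexp_quadratic hb, integral_cexp_quadratic hb,
    show (1 / 2 : ℂ) - (s - I) ^ 2 / (4 * (-1 / 2)) = s ^ 2 / 2 - I * s by
      linear_combination (1 / 2 : ℂ) * I_sq]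
  ring_nf

theorem integral_integral_swap_of_norm_le_mul {α β E : Type*} [MeasurableSpace α]
    [MeasurableSpace β] {μ : Measure α} {ν : Measure β} [SFinite μ] [SFinite ν]
    [NormedAddCommGroup E] [NormedSpace ℝ E] {F : α → β → E} {p : α → ℝ} {q : β → ℝ}
    (hF : AEStronglyMeasurable (Function.uncurry F) (μ.prod ν)) (hp : Integrable p μ)
    (hq : Integrable q ν) (h : ∀ x y, ‖F x y‖ ≤ p x * q y) :
    ∫ x, ∫ y, F x y ∂ν ∂μ = ∫ y, ∫ x, F x y ∂μ ∂ν :=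
  integral_integral_swap ((hp.mul_prod hq).mono' hF (ae_of_all _ fun z => h z.1 z.2))

theorem one_div_eq_integral_Ioi_cexp {z : ℂ} (hz : 0 < z.re) :
    1 / z = ∫ t in Ioi (0 : ℝ), cexp (-z * t) := by
  rw [integral_exp_mul_complex_Ioi (by simpa using hz), ofReal_zero, mul_zero, Complex.exp_zero]
  ring

section LaplaceRepresentation

variable {f g : ℝ → ℂ} {a : ℝ}

theorem integral_div_add_I_mul_sub_eq (ha : 0 < a) (hf : Integrable f) (v : ℝ) :
    ∫ u, f u / (a + I * (u - v)) =
      ∫ t in Ioi (0 : ℝ),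
        Real.exp (-a * t) * cexp (I * t * v) * ∫ u, f u * cexp (-I * t * u) := by
  have hkernel (u t : ℝ) : cexp (-(a + I * (u - v)) * t) =
      Real.exp (-a * t) * cexp (I * t * v) * cexp (-I * t * u) := by
    push_cast; rw [← Complex.exp_add, ← Complex.exp_add]; ring_nf
  calc ∫ u, f u / (a + I * (u - v))
      = ∫ u, ∫ t in Ioi (0 : ℝ), f u * cexp (-(a + I * (u - v)) * t) := by
        congr 1 with u
        rw [div_eq_mul_one_div, one_div_eq_integral_Ioi_cexp (by simpa using ha),
          integral_const_mul]
    _ = ∫ t in Ioi (0 : ℝ), ∫ u, f u * cexp (-(a + I * (u - v)) * t) := by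
        refine integral_integral_swap_of_norm_le_mul
          (hf.aestronglyMeasurable.comp_fst.mul (by fun_prop : Continuous _).aestronglyMeasurable)
          hf.norm (exp_neg_integrableOn_Ioi 0 ha) fun u t => ?_
        simp [norm_exp]
    _ = _ := by
        congr 1 with t
        simp_rw [hkernel, ← integral_const_mul]
        congr 1 with u
        ring

theorem integral_integral_mul_div_eq (ha : 0 < a) (hf : Integrable f) (hg : Integrable g) :
    ∫ v, ∫ u, f u * g v / (a + I * (u - v)) =
      ∫ t in Ioi (0 : ℝ), Real.exp (-a * t) *
        ((∫ u, f u * cexp (-I * t * u)) * ∫ v, g v * cexp (I * t * v)) := by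
  have hfourier_meas : AEStronglyMeasurable (fun t : ℝ => ∫ u, f u * cexp (-I * t * u))
      (volume.restrict (Ioi 0)) :=
    (hf.aestronglyMeasurable.comp_snd.mul
      (by fun_prop : Continuous fun p : ℝ × ℝ => cexp (-I * p.1 * p.2)).aestronglyMeasurable
      ).integral_prod_right'
  have hfourier_le (t : ℝ) : ‖∫ u, f u * cexp (-I * t * u)‖ ≤ ∫ u, ‖f u‖ :=
    (norm_integral_le_integral_norm _).trans_eq (by simp [norm_exp])
  calc ∫ v, ∫ u, f u * g v / (a + I * (u - v))
      = ∫ v, ∫ t in Ioi (0 : ℝ), g v * cexp (I * t * v) *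
          (Real.exp (-a * t) * ∫ u, f u * cexp (-I * t * u)) := by
        congr 1 with v
        simp_rw [mul_comm (f _) (g v), mul_div_assoc, integral_const_mul]
        rw [integral_div_add_I_mul_sub_eq ha hf v, ← integral_const_mul]
        congr 1 with t
        ring
    _ = ∫ t in Ioi (0 : ℝ), ∫ v, g v * cexp (I * t * v) *
          (Real.exp (-a * t) * ∫ u, f u * cexp (-I * t * u)) := by
        have hcont₁ : Continuous fun p : ℝ × ℝ => cexp (I * p.2 * p.1) := by fun_prop
        have hcont₂ : Continuous fun t : ℝ => (Real.exp (-a * t) : ℂ) := by fun_prop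
        refine integral_integral_swap_of_norm_le_mul
          ((hg.aestronglyMeasurable.comp_fst.mul hcont₁.aestronglyMeasurable).mul
            (hcont₂.aestronglyMeasurable.mul hfourier_meas).comp_snd)
          hg.norm ((exp_neg_integrableOn_Ioi 0 ha).mul_const (∫ u, ‖f u‖)) fun v t => ?_
        simp only [norm_mul, norm_exp, norm_real, mul_re, I_re, I_im, ofReal_re, ofReal_im,
          zero_mul, sub_self, mul_zero, Real.exp_zero, mul_one, Real.norm_eq_abs, abs_of_pos (Real.exp_pos _)]
        gcongr
        exact hfourier_le t
    _ = _ := by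
        congr 1 with t
        rw [integral_mul_const]
        ring

end LaplaceRepresentation

theorem exp_mul_gaussian_fourier_mul_eq (c t : ℝ) :
    Real.exp (-(1 + c) * t) *
      ((∫ u : ℝ, u * cexp (-u ^ 2 / 2) * cexp (-I * t * u)) *
        ∫ v : ℝ, (v + I) * cexp (-(v + I) ^ 2 / 2) * cexp (I * t * v)) =
      2 * Real.pi * ((t ^ 2 * Real.exp (-t ^ 2 - c * t) : ℝ) : ℂ) := by
  simp_rw [mul_assoc _ (cexp _), ← Complex.exp_add]
  rw [integral_mul_cexp_neg_sq_div_two_add, integral_add_I_mul_cexp_neg_add_I_sq_div_two_add]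
  push_cast
  have hS : ((2 * Real.pi : ℂ) ^ (1 / 2 : ℂ)) ^ 2 = 2 * Real.pi := by
    rw [one_div, cpow_ofNat_inv_pow]
  have hexp : cexp (-(1 + c) * t) * cexp ((-I * t) ^ 2 / 2) * cexp ((I * t) ^ 2 / 2 - I * (I * t)) =
      cexp (-t ^ 2 - c * t) := by
    rw [← Complex.exp_add, ← Complex.exp_add]; congr 1
    linear_combination (t ^ 2 - t : ℂ) * I_sq
  set P := cexp (-(1 + c) * t) * cexp ((-I * t) ^ 2 / 2) * cexp ((I * t) ^ 2 / 2 - I * (I * t))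
  linear_combination (-t ^ 2 * ((2 * Real.pi : ℂ) ^ (1 / 2 : ℂ)) ^ 2 * P) * I_sq +
    (t ^ 2 * P) * hS + (2 * Real.pi * t ^ 2 : ℂ) * hexp

/-- The final covariance computation in the proof of the bulk (Edwards–Wilkinson)
limit: for every real `c ≥ 0`,
`(1/(2π)) ∫_ℝ ∫_ℝ (u(v+i)/(1+c+iu−iv)) e^{−u²/2 − (v+i)²/2} du dv
  = ∫_0^∞ y² e^{−y² − cy} dy`,
the left-hand side being a complex-valued Lebesgue integral (inner integral in `u`). -/
theorem gaussian_double_integral_identity (c : ℝ) (hc : 0 ≤ c) :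
    (1 / (2 * (Real.pi : ℂ))) *
      ∫ v : ℝ, ∫ u : ℝ,
        (u : ℂ) * ((v : ℂ) + I) / (1 + (c : ℂ) + I * u - I * v) *
          Complex.exp (-(u : ℂ) ^ 2 / 2 - ((v : ℂ) + I) ^ 2 / 2)
      = ((∫ y in Set.Ioi (0 : ℝ), y ^ 2 * Real.exp (-y ^ 2 - c * y) : ℝ) : ℂ) := by
  have hf : Integrable fun u : ℝ => (u : ℂ) * cexp (-u ^ 2 / 2) := by
    convert integrable_mul_cexp_neg_mul_sq (b := 1 / 2) (by norm_num) using 4; ring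
  have hg : Integrable fun v : ℝ => ((v : ℂ) + I) * cexp (-(v + I) ^ 2 / 2) := by
    simpa using integrable_add_I_mul_cexp_neg_add_I_sq_div_two_add 0
  have hintegrand (u v : ℝ) :
      (u : ℂ) * ((v : ℂ) + I) / (1 + (c : ℂ) + I * u - I * v) *
        cexp (-(u : ℂ) ^ 2 / 2 - ((v : ℂ) + I) ^ 2 / 2) =
      u * cexp (-u ^ 2 / 2) * ((v + I) * cexp (-(v + I) ^ 2 / 2)) /
        ((1 + c : ℝ) + I * (u - v)) := by
    rw [show -(u : ℂ) ^ 2 / 2 - (v + I) ^ 2 / 2 = -(u : ℂ) ^ 2 / 2 + -(v + I) ^ 2 / 2 by ring,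
      Complex.exp_add]
    push_cast; ring
  simp_rw [hintegrand]
  rw [integral_integral_mul_div_eq (by linarith) hf hg]
  simp_rw [exp_mul_gaussian_fourier_mul_eq]
  rw [integral_const_mul, integral_complex_ofReal]
  field_simp
end

section
/- Let D(r,s) be the covariance double contour integral (see context). For all integers r, s ≥ 1 one has the explicit evaluation D(r,s) = Σ_{n=1}^{s} n² · (r−1)! · (s−1)! / ( (r+n)! · (s−n)! ). In particular D(1,1) = 1/2, D(2,1) = 1/6, D(1,2) = 7/6 and D(2,2) = 1/3. -/
/-!
With `g_a(w) = e^w (1 - w/a)`, the inner integrand is `r! s! g_r(z) z^{-r}` times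
`g_s(w) / ((z - w) w^s)`. The finite geometric expansion
`1 / ((z - w) w^s) = Σ_{k<s} z^{k-s} w^{-(k+1)} + z^{-s} / (z - w)` leaves a remainder that is
holomorphic on the `w`-disk (as `|z| > ρ`), so by Cauchy's formula the inner integral only sees
the Taylor coefficients `g_s^{(k)}(0) / k! = (1 - k/s) / k!`. The outer integral then picks Taylor
coefficients of `g_r` in the same way, the two factors `2πi` cancel `4π²` up to sign, and the
substitution `n = s - k` gives the stated sum.
-/

open MeasureTheory Filter Finset

open Complex Metric Real

lemma iteratedDeriv_cexp_mul_one_sub_div (a : ℂ) (k : ℕ) :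
    iteratedDeriv k (fun w => cexp w * (1 - w / a)) = fun w => cexp w * (1 - (k + w) / a) := by
  induction k with
  | zero => simp
  | succ k ih =>
    rw [iteratedDeriv_succ, ih]
    funext w
    have h : HasDerivAt (fun w => cexp w * (1 - (k + w) / a))
        (cexp w * (1 - (k + w) / a) + cexp w * -(1 / a)) w :=
      (hasDerivAt_exp w).mul ((((hasDerivAt_id' w).const_add (k : ℂ)).div_const a).const_sub 1)
    rw [h.deriv]
    push_cast
    ring

lemma circleIntegral_one_div_pow_smul_cexp_mul_one_sub_div {ρ : ℝ} (hρ : 0 < ρ) (a : ℂ)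
    (k : ℕ) :
    ∮ w in C(0, ρ), (1 / w ^ (k + 1)) • (cexp w * (1 - w / a)) =
      2 * π * I / k.factorial * (1 - k / a) := by
  have hd : DifferentiableOn ℂ (fun w => cexp w * (1 - w / a)) (closedBall 0 ρ) := by fun_prop
  simpa [iteratedDeriv_cexp_mul_one_sub_div] using
    hd.circleIntegral_one_div_sub_center_pow_smul hρ k

lemma one_div_sub_mul_pow_eq_sum {z w : ℂ} (hz : z ≠ 0) (hw : w ≠ 0) (hzw : z ≠ w)
    (s : ℕ) :
    1 / ((z - w) * w ^ s) =
      ∑ k ∈ range s, 1 / z ^ (s - k) * (1 / w ^ (k + 1)) + 1 / z ^ s * (1 / (z - w)) := by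
  have hterm : ∀ k ∈ range s,
      1 / z ^ (s - k) * (1 / w ^ (k + 1)) = z ^ k * w ^ (s - 1 - k) / (z ^ s * w ^ s) := by
    intro k hk
    have hks : k < s := mem_range.mp hk
    have hz' : z ^ s = z ^ (s - k) * z ^ k := by rw [← pow_add, Nat.sub_add_cancel hks.le]
    have hw' : w ^ s = w ^ (k + 1) * w ^ (s - 1 - k) := by rw [← pow_add]; congr 1; omega
    rw [hz', hw']
    field_simp
  have hzw' : z - w ≠ 0 := sub_ne_zero.mpr hzw
  rw [sum_congr rfl hterm, ← sum_div, eq_div_iff_mul_eq hzw' |>.mpr (geom_sum₂_mul z w s)]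
  field_simp
  ring

lemma continuousOn_one_div_pow_smul {f : ℂ → ℂ} {ρ : ℝ} (hρ : 0 < ρ)
    (hf : ContinuousOn f (sphere 0 ρ)) (k : ℕ) :
    ContinuousOn (fun w => (1 / w ^ (k + 1)) • f w) (sphere 0 ρ) :=
  (continuousOn_const.div (continuousOn_id.pow _)
    fun _ hw => pow_ne_zero _ (ne_of_mem_sphere hw hρ.ne')).smul hf

lemma circleIntegral_div_sub_mul_pow {f : ℂ → ℂ} {ρ : ℝ} (hρ : 0 < ρ)
    (hf : DifferentiableOn ℂ f (closedBall 0 ρ)) {z : ℂ} (hz : ρ < ‖z‖) (s : ℕ) :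
    ∮ w in C(0, ρ), f w / ((z - w) * w ^ s) =
      ∑ k ∈ range s, 1 / z ^ (s - k) * ∮ w in C(0, ρ), (1 / w ^ (k + 1)) • f w := by
  have hz0 : z ≠ 0 := norm_pos_iff.mp (hρ.trans hz)
  have hne : ∀ w ∈ closedBall (0 : ℂ) ρ, z ≠ w := by
    rintro w hw rfl
    exact (mem_closedBall_zero_iff.mp hw).not_gt hz
  have hterm (k : ℕ) : ContinuousOn (fun w => (1 / z ^ (s - k)) * ((1 / w ^ (k + 1)) • f w))
      (sphere 0 ρ) := continuousOn_const.mul <|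
    continuousOn_one_div_pow_smul hρ (hf.continuousOn.mono sphere_subset_closedBall) k
  have hholo : DifferentiableOn ℂ (fun w => f w / (z - w)) (closedBall 0 ρ) :=
    hf.div (differentiableOn_const z |>.sub differentiableOn_id) fun w hw =>
      sub_ne_zero.mpr (hne w hw)
  have hcauchy : ∮ w in C(0, ρ), f w / (z - w) = 0 :=
    (hholo.mono closure_ball_subset_closedBall).diffContOnCl.circleIntegral_eq_zero hρ.le
  rw [circleIntegral.integral_congr hρ.le (g := fun w =>
      ∑ k ∈ range s, 1 / z ^ (s - k) * ((1 / w ^ (k + 1)) • f w) +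
        1 / z ^ s * (f w / (z - w))),
    circleIntegral.integral_add, circleIntegral.integral_fun_sum, circleIntegral.integral_const_mul,
    hcauchy, mul_zero, add_zero]
  · simp only [circleIntegral.integral_const_mul]
  · exact fun k _ => (hterm k).circleIntegrable hρ.le
  · exact (continuousOn_finsetSum _ fun k _ => hterm k).circleIntegrable hρ.le
  · exact ((hholo.continuousOn.mono sphere_subset_closedBall).circleIntegrable hρ.le).const_mul _
  · intro w hw
    show f w / ((z - w) * w ^ s) = _
    rw [div_eq_mul_one_div (f w), one_div_sub_mul_pow_eq_sum hz0 (ne_of_mem_sphere hw hρ.ne')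
      (hne w (sphere_subset_closedBall hw)), mul_add, mul_sum]
    simp only [smul_eq_mul]
    congr 1
    · exact sum_congr rfl fun k _ => by ring
    · ring

lemma covD_integrand_eq (r s : ℕ) {z w : ℂ} (hw : w ≠ 0) :
    w / (z - w) * ((r.factorial : ℂ) * (s.factorial : ℂ) / (z ^ r * w ^ s)) *
        Complex.exp (z + w) * (1 - z / (r : ℂ)) * (1 - w / (s : ℂ)) / w =
      r.factorial * s.factorial * (cexp z * (1 - z / r)) / z ^ r *
        (cexp w * (1 - w / s) / ((z - w) * w ^ s)) := by
  rw [Complex.exp_add]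
  field_simp

lemma covD_inner_integral {ρ : ℝ} (hρ : 0 < ρ) (r s : ℕ) {z : ℂ} (hz : ρ < ‖z‖) :
    ∮ w in C(0, ρ), w / (z - w) * ((r.factorial : ℂ) * (s.factorial : ℂ) / (z ^ r * w ^ s)) *
        Complex.exp (z + w) * (1 - z / (r : ℂ)) * (1 - w / (s : ℂ)) / w =
      r.factorial * s.factorial * (cexp z * (1 - z / r)) / z ^ r *
        ∑ k ∈ range s, 1 / z ^ (s - k) * (2 * π * I / k.factorial * (1 - k / s)) := by
  rw [circleIntegral.integral_congr hρ.le fun w hw => covD_integrand_eq r s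
      (ne_of_mem_sphere hw hρ.ne'),
    circleIntegral.integral_const_mul, circleIntegral_div_sub_mul_pow hρ (by fun_prop) hz]
  simp only [circleIntegral_one_div_pow_smul_cexp_mul_one_sub_div hρ]

lemma covD_eq_sum_range {ρ R : ℝ} (hρ : 0 < ρ) (hρR : ρ < R) (r s : ℕ) :
    covD r s R ρ = 1 / (4 * (π : ℂ) ^ 2) *
      ∑ k ∈ range s, r.factorial * s.factorial * (2 * π * I / k.factorial * (1 - k / s)) *
        (2 * π * I / (r + s - k).factorial * (1 - (r + s - k : ℕ) / r)) := by
  have hR : 0 < R := hρ.trans hρR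
  rw [covD, circleIntegral.integral_congr hR.le (g := fun z => ∑ k ∈ range s,
      r.factorial * s.factorial * (2 * π * I / k.factorial * (1 - k / s)) *
        ((1 / z ^ (r + s - k + 1)) • (cexp z * (1 - z / r)))),
    circleIntegral.integral_fun_sum]
  · simp only [circleIntegral.integral_const_mul,
      circleIntegral_one_div_pow_smul_cexp_mul_one_sub_div hR]
  · exact fun k _ => (continuousOn_const.mul (continuousOn_one_div_pow_smul hR
      (f := fun z => cexp z * (1 - z / r)) (by fun_prop) (r + s - k))).circleIntegrable hR.le
  · intro z hz
    have hzR : ‖z‖ = R := mem_sphere_zero_iff_norm.mp hz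
    have hz0 : z ≠ 0 := norm_pos_iff.mp (hzR ▸ hR)
    beta_reduce
    rw [covD_inner_integral hρ r s (hzR ▸ hρR), mul_sum, sum_div]
    refine sum_congr rfl fun k hk => ?_
    rw [show r + s - k + 1 = r + (s - k) + 1 by have := mem_range.mp hk; omega, pow_succ, pow_add,
      smul_eq_mul]
    field_simp

lemma covD_sum_range_eq_sum_Icc {r s : ℕ} (hr : 1 ≤ r) (hs : 1 ≤ s) :
    1 / (4 * (π : ℂ) ^ 2) *
      ∑ k ∈ range s, r.factorial * s.factorial * (2 * π * I / k.factorial * (1 - k / s)) *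
        (2 * π * I / (r + s - k).factorial * (1 - (r + s - k : ℕ) / r)) =
      ∑ n ∈ Icc 1 s, (n : ℂ) ^ 2 * ((r - 1).factorial : ℂ) * ((s - 1).factorial : ℂ) /
        (((r + n).factorial : ℂ) * ((s - n).factorial : ℂ)) := by
  set F : ℕ → ℂ := fun n =>
    (n : ℂ) ^ 2 * ((r - 1).factorial : ℂ) * ((s - 1).factorial : ℂ) /
      (((r + n).factorial : ℂ) * ((s - n).factorial : ℂ))
  have hreflect : ∑ k ∈ range s, F (s - k) = ∑ n ∈ Icc 1 s, F n := by
    rw [range_eq_Ico, sum_Ico_reflect F 0 (Nat.le_succ s), Nat.add_sub_cancel_left,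
      Nat.sub_zero, Ico_add_one_right_eq_Icc]
  rw [← hreflect, mul_sum]
  refine sum_congr rfl fun k hk => ?_
  have hks : k ≤ s := (mem_range.mp hk).le
  have hr0 : (r : ℂ) ≠ 0 := Nat.cast_ne_zero.mpr (by omega)
  have hs0 : (s : ℂ) ≠ 0 := Nat.cast_ne_zero.mpr (by omega)
  have hπ : (π : ℂ) ≠ 0 := ofReal_ne_zero.mpr pi_ne_zero
  have hleft : (1 - k / s : ℂ) = (s - k : ℕ) / s := by rw [Nat.cast_sub hks]; field_simp
  have hright : (1 - (r + s - k : ℕ) / r : ℂ) = -(s - k : ℕ) / r := by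
    rw [Nat.add_sub_assoc hks, Nat.cast_add]; field_simp; ring
  simp only [F, Nat.sub_sub_self hks, ← Nat.add_sub_assoc hks, hleft, hright]
  rw [← Nat.mul_factorial_pred (by omega : r ≠ 0),
    ← Nat.mul_factorial_pred (by omega : s ≠ 0)]
  push_cast
  field_simp
  rw [I_sq]
  ring

/-- Explicit residue evaluation of the covariance contour integral:
`D(r,s) = Σ_{n=1}^{s} n² (r−1)! (s−1)! / ((r+n)! (s−n)!)` for all `r, s ≥ 1`;
in particular `D(1,1) = 1/2`, `D(2,1) = 1/6`, `D(1,2) = 7/6`, `D(2,2) = 1/3`. -/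
theorem covD_explicit (ρ R : ℝ) (hρ : 0 < ρ) (hρR : ρ < R) :
    (∀ r s : ℕ, 1 ≤ r → 1 ≤ s →
      covD r s R ρ =
        ∑ n ∈ Finset.Icc 1 s,
          (n : ℂ) ^ 2 * ((r - 1).factorial : ℂ) * ((s - 1).factorial : ℂ) /
            (((r + n).factorial : ℂ) * ((s - n).factorial : ℂ))) ∧
    covD 1 1 R ρ = 1 / 2 ∧ covD 2 1 R ρ = 1 / 6 ∧
    covD 1 2 R ρ = 7 / 6 ∧ covD 2 2 R ρ = 1 / 3 := by
  have h (r s : ℕ) (hr : 1 ≤ r) (hs : 1 ≤ s) := (covD_eq_sum_range hρ hρR r s).trans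
    (covD_sum_range_eq_sum_Icc hr hs)
  refine ⟨h, ?_, ?_, ?_, ?_⟩ <;>
    rw [h _ _ (by norm_num) (by norm_num)] <;>
    norm_num [sum_Icc_succ_top, Nat.factorial]
end

section
/- For all natural numbers a, b ≥ 0 and all radii 0 < ρ < R, the two iterated contour integrals (1/(2πi)²) ∮_{|z|=R} ∮_{|w|=ρ} (w/(z−w)) · e^{z+w} · z^{−a−1} w^{−b−1} dw dz and (1/(2πi)²) ∮_{|z|=R} ∮_{|w|=ρ} (w/(z−w)) · ((z+w)^{a+b}/(a+b)!) · z^{−a−1} w^{−b−1} dw dz are equal. -/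
/-!
For fixed `z` on the outer circle, the partial fraction expansion
`1/((z - w) w^b) = ∑_{j<b} z^{j-b} w^{-j-1} + z^{-b}/(z - w)` and Cauchy's formula turn the inner
integral of any entire `F` into `∑_{j<b} (2πi/j!) F^{(j)}(z) z^{j-a-b-1}`; the remaining term is
holomorphic on `|w| ≤ ρ < |z|` and integrates to zero. Cauchy's formula on the outer circle then
gives `(2πi)² ∑_{j<b} F^{(a+b)}(0) / (j! (a+b-j)!)`, which sees `F` only through `F^{(a+b)}(0)`,
and this equals `1` both for `exp` and for `u^{a+b}/(a+b)!`.
-/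

open MeasureTheory Complex Metric Finset
open scoped Nat

theorem circleIntegral.integral_finsetSum {ι E : Type*} [NormedAddCommGroup E]
    [NormedSpace ℂ E] (s : Finset ι) {f : ι → ℂ → E} {c : ℂ} {r : ℝ}
    (hf : ∀ i ∈ s, CircleIntegrable (f i) c r) :
    ∮ z in C(c, r), ∑ i ∈ s, f i z = ∑ i ∈ s, ∮ z in C(c, r), f i z := by
  simp only [circleIntegral, smul_sum]
  exact intervalIntegral.integral_finsetSum fun i hi => (hf i hi).out

theorem circleIntegral_div_sub_pow_succ {f : ℂ → ℂ} {c : ℂ} {r : ℝ} (hr : 0 < r)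
    (hf : DifferentiableOn ℂ f (closedBall c r)) (n : ℕ) :
    ∮ z in C(c, r), f z / (z - c) ^ (n + 1) = 2 * Real.pi * I / n ! * iteratedDeriv n f c := by
  simpa [div_eq_inv_mul] using hf.circleIntegral_one_div_sub_center_pow_smul hr n

theorem iteratedDeriv_iteratedDeriv {𝕜 E : Type*} [NontriviallyNormedField 𝕜]
    [NormedAddCommGroup E] [NormedSpace 𝕜 E] (f : 𝕜 → E) (m n : ℕ) :
    iteratedDeriv m (iteratedDeriv n f) = iteratedDeriv (m + n) f := by
  simp only [iteratedDeriv_eq_iterate, Function.iterate_add_apply]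

theorem inv_sub_mul_inv_pow_eq_sum {K : Type*} [Field K] {z w : K} (hz : z ≠ 0) (hw : w ≠ 0)
    (hzw : z ≠ w) (b : ℕ) :
    (z - w)⁻¹ * (w ^ b)⁻¹ =
      ∑ j ∈ range b, (z ^ (b - j))⁻¹ * (w ^ (j + 1))⁻¹ + (z ^ b)⁻¹ * (z - w)⁻¹ := by
  have hzw' : z - w ≠ 0 := sub_ne_zero.2 hzw
  induction b with
  | zero => simp
  | succ b ih =>
    have hsplit : (z - w)⁻¹ * w⁻¹ = z⁻¹ * w⁻¹ + z⁻¹ * (z - w)⁻¹ := by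
      field_simp
      ring
    have hshift : ∀ j ∈ range b, (z ^ (b - j))⁻¹ * (w ^ (j + 1))⁻¹ * w⁻¹ =
        (z ^ (b + 1 - (j + 1)))⁻¹ * (w ^ (j + 1 + 1))⁻¹ := fun j _ => by
      rw [Nat.add_sub_add_right, pow_succ w (j + 1), mul_inv, mul_assoc]
    calc (z - w)⁻¹ * (w ^ (b + 1))⁻¹ = ((z - w)⁻¹ * (w ^ b)⁻¹) * w⁻¹ := by
          rw [pow_succ, mul_inv, mul_assoc]
      _ = _ := by
          rw [ih, add_mul, sum_mul, sum_congr rfl hshift, mul_assoc, hsplit, sum_range_succ' _ b]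
          simp only [pow_succ, mul_inv, Nat.sub_zero, zero_add]
          ring

theorem circleIntegral_kernel_eq_sum_iteratedDeriv {g : ℂ → ℂ} {ρ : ℝ} (hρ : 0 < ρ)
    (hg : DifferentiableOn ℂ g (closedBall 0 ρ)) {z : ℂ} (hz : ρ < ‖z‖) (a b : ℕ) :
    ∮ w in C(0, ρ), w / (z - w) * g w / (z ^ (a + 1) * w ^ (b + 1)) =
      ∑ j ∈ range b, 2 * Real.pi * I / j ! * (iteratedDeriv j g 0 / z ^ (a + b - j + 1)) := by
  have hz0 : z ≠ 0 := norm_pos_iff.1 (hρ.trans hz)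
  have hball : ∀ w ∈ closedBall (0 : ℂ) ρ, z ≠ w := fun w hw h => by
    rw [mem_closedBall_zero_iff, ← h] at hw; linarith
  have hsphere : ∀ w ∈ sphere (0 : ℂ) ρ, w ≠ 0 := fun w hw =>
    ne_zero_of_mem_sphere hρ.ne' ⟨w, hw⟩
  have hcoeff : ∀ j, ContinuousOn (fun w => g w / w ^ (j + 1)) (sphere 0 ρ) := fun j =>
    (hg.continuousOn.mono sphere_subset_closedBall).div (continuous_pow _).continuousOn
      fun w hw => pow_ne_zero _ (hsphere w hw)
  have hregular : DifferentiableOn ℂ (fun w => g w / (z - w)) (closedBall 0 ρ) :=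
    hg.div (differentiableOn_const z |>.sub differentiableOn_id) fun w hw =>
      sub_ne_zero.2 (hball w hw)
  have hsplit : Set.EqOn (fun w => w / (z - w) * g w / (z ^ (a + 1) * w ^ (b + 1)))
      (fun w => ∑ j ∈ range b, (z ^ (a + b - j + 1))⁻¹ * (g w / w ^ (j + 1)) +
        (z ^ (a + b + 1))⁻¹ * (g w / (z - w))) (sphere 0 ρ) := fun w hw => by
    have hzw := hball w (sphere_subset_closedBall hw)
    have hz_pow : ∀ j < b, (z ^ (a + b - j + 1))⁻¹ = (z ^ (a + 1))⁻¹ * (z ^ (b - j))⁻¹ :=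
      fun j hj => by rw [← mul_inv, ← pow_add]; congr 2; omega
    calc w / (z - w) * g w / (z ^ (a + 1) * w ^ (b + 1))
        = g w * (z ^ (a + 1))⁻¹ * ((z - w)⁻¹ * (w ^ b)⁻¹) := by
          field_simp [sub_ne_zero.2 hzw, hsphere w hw]
          ring
      _ = _ := by
        rw [inv_sub_mul_inv_pow_eq_sum hz0 (hsphere w hw) hzw, mul_add, mul_sum]
        congr 1
        · refine sum_congr rfl fun j hj => ?_
          rw [hz_pow j (mem_range.1 hj)]
          ring
        · ring
  rw [circleIntegral.integral_congr hρ.le hsplit, circleIntegral.integral_add,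
    circleIntegral.integral_finsetSum, circleIntegral.integral_const_mul,
    (hregular.mono closure_ball_subset_closedBall).diffContOnCl.circleIntegral_eq_zero hρ.le,
    mul_zero, add_zero]
  · refine sum_congr rfl fun j _ => ?_
    have hcauchy := circleIntegral_div_sub_pow_succ hρ hg j
    simp only [sub_zero] at hcauchy
    rw [circleIntegral.integral_const_mul, hcauchy]
    ring
  · exact fun j _ => (continuousOn_const.mul (hcoeff j)).circleIntegrable hρ.le
  · exact (continuousOn_finsetSum _ fun j _ => continuousOn_const.mul (hcoeff j)).circleIntegrable
      hρ.le
  · exact (continuousOn_const.mul (hregular.continuousOn.mono sphere_subset_closedBall))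
      |>.circleIntegrable hρ.le

theorem double_circleIntegral_kernel_eq_iteratedDeriv {F : ℂ → ℂ} (hF : Differentiable ℂ F)
    {ρ R : ℝ} (hρ : 0 < ρ) (hρR : ρ < R) (a b : ℕ) :
    ∮ z in C(0, R), ∮ w in C(0, ρ), w / (z - w) * F (z + w) / (z ^ (a + 1) * w ^ (b + 1)) =
      (2 * Real.pi * I) ^ 2 * (∑ j ∈ range b, ((j ! : ℂ) * (a + b - j)!)⁻¹) *
        iteratedDeriv (a + b) F 0 := by
  have hR : 0 < R := hρ.trans hρR
  have hderiv : ∀ j, Differentiable ℂ (iteratedDeriv j F) := fun j =>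
    hF.contDiff.differentiable_iteratedDeriv j (WithTop.coe_lt_top _)
  have hinner : Set.EqOn
      (fun z => ∮ w in C(0, ρ), w / (z - w) * F (z + w) / (z ^ (a + 1) * w ^ (b + 1)))
      (fun z => ∑ j ∈ range b,
        2 * Real.pi * I / j ! * (iteratedDeriv j F z / z ^ (a + b - j + 1)))
      (sphere 0 R) := fun z hz => by
    have hshift := circleIntegral_kernel_eq_sum_iteratedDeriv hρ (g := fun w => F (z + w))
      (hF.comp (differentiable_const z |>.add differentiable_id)).differentiableOn
      (hρR.trans_eq (mem_sphere_zero_iff_norm.1 hz).symm) a b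
    simpa only [iteratedDeriv_comp_const_add, add_zero] using hshift
  rw [circleIntegral.integral_congr hR.le hinner, circleIntegral.integral_finsetSum, mul_sum,
    sum_mul]
  · refine sum_congr rfl fun j hj => ?_
    have hj : j ≤ a + b := by rw [mem_range] at hj; omega
    have hcauchy := circleIntegral_div_sub_pow_succ (c := 0) hR (hderiv j).differentiableOn
      (a + b - j)
    simp only [sub_zero, iteratedDeriv_iteratedDeriv, Nat.sub_add_cancel hj] at hcauchy
    rw [circleIntegral.integral_const_mul, hcauchy]
    field_simp
  · exact fun j _ => (continuousOn_const.mul ((hderiv j).continuous.continuousOn.div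
      (continuous_pow _).continuousOn fun z hz =>
        pow_ne_zero _ (ne_zero_of_mem_sphere hR.ne' ⟨z, hz⟩))).circleIntegrable hR.le

theorem iteratedDeriv_cexp_zero (n : ℕ) : iteratedDeriv n exp 0 = 1 := by
  rw [iteratedDeriv_eq_iterate, iter_deriv_exp, exp_zero]

theorem iteratedDeriv_pow_div_factorial_zero (n : ℕ) :
    iteratedDeriv n (fun u : ℂ => u ^ n / n !) 0 = 1 := by
  simp [Nat.descFactorial_self, Nat.factorial_ne_zero]

/-- Replacing `e^{z+w}` by the single homogeneous term `(z+w)^{a+b}/(a+b)!` of matching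
degree does not change the double contour integral: for all naturals `a, b` and radii
`0 < ρ < R`,
`(1/(2πi)²) ∮_{|z|=R} ∮_{|w|=ρ} (w/(z−w)) e^{z+w} z^{−a−1} w^{−b−1} dw dz
 = (1/(2πi)²) ∮_{|z|=R} ∮_{|w|=ρ} (w/(z−w)) ((z+w)^{a+b}/(a+b)!) z^{−a−1} w^{−b−1} dw dz`. -/
theorem contour_exp_to_power (a b : ℕ) (ρ R : ℝ) (hρ : 0 < ρ) (hρR : ρ < R) :
    (1 / (2 * (Real.pi : ℂ) * I) ^ 2) *
      (∮ z in C((0 : ℂ), R), ∮ w in C((0 : ℂ), ρ),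
        w / (z - w) * Complex.exp (z + w) / (z ^ (a + 1) * w ^ (b + 1)))
    = (1 / (2 * (Real.pi : ℂ) * I) ^ 2) *
      (∮ z in C((0 : ℂ), R), ∮ w in C((0 : ℂ), ρ),
        w / (z - w) * ((z + w) ^ (a + b) / ((a + b).factorial : ℂ)) /
          (z ^ (a + 1) * w ^ (b + 1))) := by
  have hpow : Differentiable ℂ fun u : ℂ => u ^ (a + b) / (a + b)! :=
    (differentiable_pow _).div_const _
  rw [double_circleIntegral_kernel_eq_iteratedDeriv differentiable_exp hρ hρR,
    double_circleIntegral_kernel_eq_iteratedDeriv hpow hρ hρR, iteratedDeriv_cexp_zero,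
    iteratedDeriv_pow_div_factorial_zero]
end

section
/- For every natural number r and every complex number z, Σ_{k=0}^{r} ((−1)^k / ((r−k)!·k!)) · ( ∫_0^∞ (y−z)^k y^{r−k} e^{−y} dy ) · ( ∫_0^∞ (x−z)^k x^{r−k} e^{−x} dx ) = (z^r / r!) · ∫_0^∞ u (u−z)^r e^{−u} du, where all integrals are absolutely convergent complex-valued integrals over (0,∞). -/
/-!
Since `x y - (x - z) (y - z) = z (x + y - z)`, the binomial theorem collapses the sum of products
of the two integrands into `z ^ r (x + y - z) ^ r e^{-x-y} / r!`, so by Fubini the left side is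
`z ^ r / r!` times the integral of `(x + y - z) ^ r e^{-x-y}` over the open quadrant. For every
polynomial `p`, `∫∫ p(x + y) e^{-x-y} = ∫ u p(u) e^{-u}` (the sum of two standard exponential
variables has density `u e^{-u}`): on monomials both sides are `(n + 1)!`, because
`∑ₘ (n choose m) m! (n - m)! = (n + 1) n!`.
-/

open MeasureTheory Complex Finset Polynomial Nat

lemma pow_mul_exp_neg_eq_gammaIntegrand (n : ℕ) (y : ℝ) :
    (y : ℂ) ^ n * cexp (-(y : ℂ)) = ↑(Real.exp (-y)) * (y : ℂ) ^ ((n + 1 : ℂ) - 1) := by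
  rw [add_sub_cancel_right, cpow_natCast, ofReal_exp, ofReal_neg, mul_comm]

lemma integrableOn_Ioi_pow_mul_exp_neg (n : ℕ) :
    IntegrableOn (fun y : ℝ ↦ (y : ℂ) ^ n * cexp (-(y : ℂ))) (Set.Ioi 0) := by
  simpa only [pow_mul_exp_neg_eq_gammaIntegrand] using
    GammaIntegral_convergent (s := n + 1) (by simp; positivity)

lemma integral_Ioi_pow_mul_exp_neg (n : ℕ) :
    ∫ y in Set.Ioi (0 : ℝ), (y : ℂ) ^ n * cexp (-(y : ℂ)) = n ! := by
  simp_rw [pow_mul_exp_neg_eq_gammaIntegrand, ← Gamma_nat_eq_factorial,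
    Gamma_eq_integral (s := n + 1) (by simp; positivity), GammaIntegral]

lemma integrableOn_Ioi_eval_mul_exp_neg (p : ℂ[X]) :
    IntegrableOn (fun y : ℝ ↦ p.eval (y : ℂ) * cexp (-(y : ℂ))) (Set.Ioi 0) := by
  simp_rw [eval_eq_sum_range, sum_mul, mul_assoc]
  exact integrable_finsetSum _ fun i _ ↦ (integrableOn_Ioi_pow_mul_exp_neg i).const_mul _

lemma add_pow_mul_exp_neg_mul_exp_neg (n : ℕ) (x y : ℝ) :
    ((x : ℂ) + y) ^ n * cexp (-(x : ℂ)) * cexp (-(y : ℂ)) =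
      ∑ m ∈ range (n + 1), (n.choose m : ℂ) *
        ((x : ℂ) ^ m * cexp (-(x : ℂ)) * ((y : ℂ) ^ (n - m) * cexp (-(y : ℂ)))) := by
  rw [add_pow, sum_mul, sum_mul]
  exact sum_congr rfl fun m _ ↦ by ring

lemma integrableOn_Ioi_prod_add_pow_mul_exp_neg (n : ℕ) :
    IntegrableOn
      (fun q : ℝ × ℝ ↦ ((q.1 : ℂ) + q.2) ^ n * cexp (-(q.1 : ℂ)) * cexp (-(q.2 : ℂ)))
      (Set.Ioi 0 ×ˢ Set.Ioi 0) := by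
  rw [IntegrableOn, Measure.volume_eq_prod, ← Measure.prod_restrict]
  simp_rw [add_pow_mul_exp_neg_mul_exp_neg]
  exact integrable_finsetSum _ fun m _ ↦ ((integrableOn_Ioi_pow_mul_exp_neg m).mul_prod
    (integrableOn_Ioi_pow_mul_exp_neg (n - m))).const_mul _

lemma integral_Ioi_prod_add_pow_mul_exp_neg (n : ℕ) :
    ∫ q in Set.Ioi (0 : ℝ) ×ˢ Set.Ioi (0 : ℝ),
        ((q.1 : ℂ) + q.2) ^ n * cexp (-(q.1 : ℂ)) * cexp (-(q.2 : ℂ)) = (n + 1)! := by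
  rw [Measure.volume_eq_prod, ← Measure.prod_restrict]
  simp_rw [add_pow_mul_exp_neg_mul_exp_neg]
  rw [integral_finsetSum _ fun m _ ↦ ((integrableOn_Ioi_pow_mul_exp_neg m).mul_prod
    (integrableOn_Ioi_pow_mul_exp_neg (n - m))).const_mul _]
  trans ∑ m ∈ range (n + 1), (n ! : ℂ)
  · refine sum_congr rfl fun m hm ↦ ?_
    rw [integral_const_mul, integral_prod_mul (fun x : ℝ ↦ (x : ℂ) ^ m * cexp (-(x : ℂ)))
      (fun y : ℝ ↦ (y : ℂ) ^ (n - m) * cexp (-(y : ℂ))), integral_Ioi_pow_mul_exp_neg,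
      integral_Ioi_pow_mul_exp_neg, ← mul_assoc]
    exact_mod_cast choose_mul_factorial_mul_factorial (mem_range_succ_iff.mp hm)
  · simp [factorial_succ]

lemma integral_Ioi_prod_eval_add_mul_exp_neg (p : ℂ[X]) :
    ∫ q in Set.Ioi (0 : ℝ) ×ˢ Set.Ioi (0 : ℝ),
        p.eval ((q.1 : ℂ) + q.2) * cexp (-(q.1 : ℂ)) * cexp (-(q.2 : ℂ))
      = ∫ u in Set.Ioi (0 : ℝ), (u : ℂ) * p.eval (u : ℂ) * cexp (-(u : ℂ)) := by
  have expand_prod (q : ℝ × ℝ) :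
      p.eval ((q.1 : ℂ) + q.2) * cexp (-(q.1 : ℂ)) * cexp (-(q.2 : ℂ)) =
        ∑ i ∈ range (p.natDegree + 1),
          p.coeff i * (((q.1 : ℂ) + q.2) ^ i * cexp (-(q.1 : ℂ)) * cexp (-(q.2 : ℂ))) := by
    rw [eval_eq_sum_range, sum_mul, sum_mul]
    exact sum_congr rfl fun _ _ ↦ by ring
  have expand (u : ℝ) : (u : ℂ) * p.eval (u : ℂ) * cexp (-(u : ℂ)) =
      ∑ i ∈ range (p.natDegree + 1), p.coeff i * ((u : ℂ) ^ (i + 1) * cexp (-(u : ℂ))) := by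
    rw [eval_eq_sum_range, mul_sum, sum_mul]
    exact sum_congr rfl fun _ _ ↦ by ring
  simp_rw [expand_prod, expand]
  rw [integral_finsetSum _ fun i _ ↦
      (integrableOn_Ioi_prod_add_pow_mul_exp_neg i).const_mul _,
    integral_finsetSum _ fun i _ ↦ (integrableOn_Ioi_pow_mul_exp_neg (i + 1)).const_mul _]
  refine sum_congr rfl fun i _ ↦ ?_
  rw [integral_const_mul, integral_const_mul, integral_Ioi_prod_add_pow_mul_exp_neg,
    integral_Ioi_pow_mul_exp_neg]

lemma sum_neg_one_pow_div_factorial_mul {K : Type*} [Field K] [CharZero K] (r : ℕ) (x y z : K) :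
    ∑ k ∈ range (r + 1), (-1) ^ k / ((r - k)! * k ! : K) *
        ((x - z) ^ k * x ^ (r - k) * ((y - z) ^ k * y ^ (r - k)))
      = z ^ r / r ! * (x + y - z) ^ r := by
  rw [div_mul_eq_mul_div, ← mul_pow, show z * (x + y - z) = -((x - z) * (y - z)) + x * y by ring,
    add_pow, sum_div]
  refine sum_congr rfl fun k hk ↦ ?_
  have := (r - k).factorial_ne_zero
  have := k.factorial_ne_zero
  have := r.factorial_ne_zero
  rw [Nat.cast_choose K (mem_range_succ_iff.mp hk), neg_pow ((x - z) * (y - z)), mul_pow]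
  field_simp
  ring

/-- The Christoffel–Darboux-type evaluation for the Laguerre-related orthogonal
polynomials `p_k^{r+1}(z) = (1/(r−k)!) ∫_0^∞ (y−z)^k y^{r−k} e^{−y} dy`:
for every natural `r` and complex `z`,
`Σ_{k=0}^{r} ((−1)^k/((r−k)!k!)) (∫_0^∞ (y−z)^k y^{r−k} e^{−y} dy)
   (∫_0^∞ (x−z)^k x^{r−k} e^{−x} dx) = (z^r/r!) ∫_0^∞ u (u−z)^r e^{−u} du`. -/
theorem christoffel_darboux_sum (r : ℕ) (z : ℂ) :
    ∑ k ∈ Finset.range (r + 1),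
      ((-1 : ℂ) ^ k / (((r - k).factorial : ℂ) * (k.factorial : ℂ))) *
        (∫ y in Set.Ioi (0 : ℝ), ((y : ℂ) - z) ^ k * (y : ℂ) ^ (r - k) * Complex.exp (-(y : ℂ))) *
        (∫ x in Set.Ioi (0 : ℝ), ((x : ℂ) - z) ^ k * (x : ℂ) ^ (r - k) * Complex.exp (-(x : ℂ)))
    = (z ^ r / (r.factorial : ℂ)) *
        ∫ u in Set.Ioi (0 : ℝ), (u : ℂ) * ((u : ℂ) - z) ^ r * Complex.exp (-(u : ℂ)) := by
  set f : ℕ → ℝ → ℂ := fun k y ↦ ((y : ℂ) - z) ^ k * (y : ℂ) ^ (r - k) * cexp (-(y : ℂ))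
  have hf (k : ℕ) : IntegrableOn (f k) (Set.Ioi 0) := by
    have h := integrableOn_Ioi_eval_mul_exp_neg ((X - C z) ^ k * X ^ (r - k))
    simp only [eval_mul, eval_pow, eval_sub, eval_X, eval_C] at h
    exact h
  calc
    _ = ∫ q in Set.Ioi (0 : ℝ) ×ˢ Set.Ioi (0 : ℝ), ∑ k ∈ range (r + 1),
        (-1 : ℂ) ^ k / ((r - k)! * k ! : ℂ) * (f k q.1 * f k q.2) := by
      rw [Measure.volume_eq_prod, ← Measure.prod_restrict,
        integral_finsetSum _ fun k _ ↦ ((hf k).mul_prod (hf k)).const_mul _]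
      refine sum_congr rfl fun k _ ↦ ?_
      rw [integral_const_mul, integral_prod_mul (f k) (f k), mul_assoc]
    _ = z ^ r / r ! * ∫ q in Set.Ioi (0 : ℝ) ×ˢ Set.Ioi (0 : ℝ),
        ((X - C z) ^ r).eval ((q.1 : ℂ) + q.2) * cexp (-(q.1 : ℂ)) * cexp (-(q.2 : ℂ)) := by
      rw [← integral_const_mul]
      refine integral_congr_ae (ae_of_all _ fun q ↦ ?_)
      have collapse := congrArg (· * (cexp (-(q.1 : ℂ)) * cexp (-(q.2 : ℂ))))
        (sum_neg_one_pow_div_factorial_mul r (q.1 : ℂ) q.2 z)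
      simp only [sum_mul] at collapse
      simp only [f, eval_pow, eval_sub, eval_X, eval_C]
      convert collapse using 1
      · exact sum_congr rfl fun _ _ ↦ by ring
      · ring
    _ = _ := by rw [integral_Ioi_prod_eval_add_mul_exp_neg]; simp
end

section
/- Let n ≥ 1 be an integer, t a real number with 0 < t < 1, u a nonzero real number, and λ = (λ_1 ≥ λ_2 ≥ ⋯ ≥ λ_n ≥ 0) a partition with at most n parts. Set x_i = u·t^{i−1} for 1 ≤ i ≤ n (these points are pairwise distinct). Then Σ_{σ ∈ S_n} ∏_{i=1}^{n} x_{σ(i)}^{λ_i} · ∏_{1 ≤ i < j ≤ n} ( x_{σ(i)} − t·x_{σ(j)} ) / ( x_{σ(i)} − x_{σ(j)} ) = u^{|λ|} · t^{n(λ)} · (t;t)_n / (1−t)^n, where |λ| = Σ_i λ_i, n(λ) = Σ_{i=1}^{n} (i−1)λ_i, and (t;t)_n = ∏_{i=1}^{n} (1 − t^i). (This is the principal specialization formula P_λ(u, ut, …, ut^{n−1}; t) = u^{|λ|} t^{n(λ)} (t;t)_n / ( (t;t)_{n−ℓ(λ)} ∏_{i≥1} (t;t)_{m_i(λ)} ) combined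 with the explicit symmetrization formula defining the Hall–Littlewood polynomial P_λ.) -/
/-!
Only the identity permutation contributes. At `x_i = u t^i` the factor `x_{σ i} - t x_{σ j}`
vanishes as soon as `σ i = σ j + 1` for some `i < j`, and every permutation other than the
identity has such a descent of consecutive values, since otherwise `σ⁻¹` would be strictly
monotone. In the identity term, the factors with larger index `j` telescope to
`(1 - t^{j+1}) / (1 - t)`.
-/

open Finset

theorem Equiv.Perm.exists_lt_val_apply_eq_succ {n : ℕ} {σ : Equiv.Perm (Fin n)}
    (hσ : σ ≠ 1) : ∃ i j, i < j ∧ (σ i : ℕ) = σ j + 1 := by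
  cases n with
  | zero => exact absurd (Subsingleton.elim σ 1) hσ
  | succ m =>
    have hmono : ¬ StrictMono σ.symm := fun h =>
      hσ (Equiv.ext fun i => by simpa using congrArg σ (h.apply_eq (x := i)).symm)
    simp only [Fin.strictMono_iff_lt_succ, not_forall, not_lt] at hmono
    obtain ⟨k, hk⟩ := hmono
    exact ⟨σ.symm k.succ, σ.symm k.castSucc,
      lt_of_le_of_ne hk (σ.symm.injective.ne Fin.castSucc_lt_succ.ne'), by simp⟩

theorem Finset.prod_filter_fin_lt_eq_prod_range {M : Type*} [CommMonoid M] {n : ℕ}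
    (f : ℕ → ℕ → M) :
    ∏ p ∈ univ.filter (fun p : Fin n × Fin n => p.1 < p.2), f p.1 p.2
      = ∏ j ∈ range n, ∏ i ∈ range j, f i j := by
  rw [prod_filter, Fintype.prod_prod_type_right, ← Fin.prod_univ_eq_prod_range]
  refine prod_congr rfl fun j _ => ?_
  rw [← prod_filter, ← Nat.Iio_eq_range, ← Fin.map_valEmbedding_Iio, prod_map]
  exact prod_congr (by ext; simp) fun _ _ => rfl

theorem Finset.prod_range_div_of_ne_zero {G₀ : Type*} [CommGroupWithZero G₀] (f : ℕ → G₀)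
    (hf : ∀ i, f i ≠ 0) (n : ℕ) :
    ∏ i ∈ range n, f i / f (i + 1) = f 0 / f n := by
  induction n with
  | zero => simp [hf 0]
  | succ n ih => rw [prod_range_succ, ih, div_mul_div_cancel₀ (hf n)]

theorem prod_geometric_pow {M : Type*} [CommMonoid M] {n : ℕ} (u t : M) (lam : Fin n → ℕ) :
    ∏ i : Fin n, (u * t ^ (i : ℕ)) ^ lam i
      = u ^ (∑ i, lam i) * t ^ (∑ i : Fin n, (i : ℕ) * lam i) := by
  simp only [mul_pow, prod_mul_distrib, prod_pow_eq_pow_sum, ← pow_mul]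

section HallLittlewood

variable {K : Type*} [Field K]

/-- The `σ`-summand of the symmetrization formula for `v_λ(t) P_λ(x; t)`. -/
def hallLittlewoodTerm {n : ℕ} (x : Fin n → K) (t : K)
    (lam : Fin n → ℕ) (σ : Equiv.Perm (Fin n)) : K :=
  (∏ i : Fin n, x (σ i) ^ lam i) *
    ∏ p ∈ univ.filter (fun p : Fin n × Fin n => p.1 < p.2),
      (x (σ p.1) - t * x (σ p.2)) / (x (σ p.1) - x (σ p.2))

theorem hallLittlewoodTerm_eq_zero {n : ℕ} {x : Fin n → K} {t : K} {lam : Fin n → ℕ}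
    {σ : Equiv.Perm (Fin n)} {i j : Fin n} (hij : i < j) (h : x (σ i) = t * x (σ j)) :
    hallLittlewoodTerm x t lam σ = 0 :=
  mul_eq_zero_of_right _ <| prod_eq_zero (i := (i, j)) (by simpa using hij) (by simp [h])

theorem sum_hallLittlewoodTerm_geometric (n : ℕ) (u t : K) (lam : Fin n → ℕ) :
    ∑ σ, hallLittlewoodTerm (fun i : Fin n => u * t ^ (i : ℕ)) t lam σ
      = hallLittlewoodTerm (fun i : Fin n => u * t ^ (i : ℕ)) t lam 1 := by
  refine sum_eq_single 1 (fun σ _ hσ => ?_) (by simp)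
  obtain ⟨i, j, hij, hσij⟩ := σ.exists_lt_val_apply_eq_succ hσ
  exact hallLittlewoodTerm_eq_zero hij (by rw [hσij, pow_succ]; ring)

theorem prod_range_geometric_ratio {u t : K} (hu : u ≠ 0) (ht₀ : t ≠ 0)
    (ht : ∀ k, t ^ (k + 1) ≠ 1) (j : ℕ) :
    ∏ i ∈ range j, (u * t ^ i - t * (u * t ^ j)) / (u * t ^ i - u * t ^ j)
      = (1 - t ^ (j + 1)) / (1 - t) := by
  have hterm : ∀ i ∈ range j, (u * t ^ i - t * (u * t ^ j)) / (u * t ^ i - u * t ^ j)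
      = (1 - t ^ (j - i + 1)) / (1 - t ^ (j - (i + 1) + 1)) := by
    intro i hi
    obtain ⟨d, rfl⟩ := Nat.exists_eq_add_of_lt (mem_range.mp hi)
    rw [show i + d + 1 - i + 1 = d + 2 by omega, show i + d + 1 - (i + 1) + 1 = d + 1 by omega,
      ← mul_div_mul_left (1 - t ^ (d + 2)) _ (mul_ne_zero hu (pow_ne_zero i ht₀))]
    congr 1 <;> ring
  rw [prod_congr rfl hterm, prod_range_div_of_ne_zero (fun i => 1 - t ^ (j - i + 1))
    (fun i => sub_ne_zero.mpr (ht _).symm)]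
  simp

theorem prod_pairs_geometric {n : ℕ} {u t : K} (hu : u ≠ 0) (ht₀ : t ≠ 0)
    (ht : ∀ k, t ^ (k + 1) ≠ 1) :
    ∏ p ∈ univ.filter (fun p : Fin n × Fin n => p.1 < p.2),
        (u * t ^ (p.1 : ℕ) - t * (u * t ^ (p.2 : ℕ))) /
          (u * t ^ (p.1 : ℕ) - u * t ^ (p.2 : ℕ))
      = (∏ i ∈ range n, (1 - t ^ (i + 1))) / (1 - t) ^ n := by
  rw [prod_filter_fin_lt_eq_prod_range
      (fun i j => (u * t ^ i - t * (u * t ^ j)) / (u * t ^ i - u * t ^ j)),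
    prod_congr rfl fun j _ => prod_range_geometric_ratio hu ht₀ ht j, prod_div_distrib,
    prod_const, card_range]

end HallLittlewood

theorem hall_littlewood_principal_specialization_general
    (n : ℕ) (t u : ℝ) (ht0 : 0 < t) (ht1 : t < 1) (hu : u ≠ 0)
    (lam : Fin n → ℕ) :
    ∑ σ : Equiv.Perm (Fin n),
      (∏ i : Fin n, (u * t ^ (σ i : ℕ)) ^ lam i) *
        ∏ p ∈ Finset.univ.filter (fun p : Fin n × Fin n => p.1 < p.2),
          (u * t ^ (σ p.1 : ℕ) - t * (u * t ^ (σ p.2 : ℕ))) /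
            (u * t ^ (σ p.1 : ℕ) - u * t ^ (σ p.2 : ℕ))
    = u ^ (∑ i : Fin n, lam i) * t ^ (∑ i : Fin n, (i : ℕ) * lam i) *
        (∏ i ∈ Finset.range n, (1 - t ^ (i + 1))) / (1 - t) ^ n := by
  have ht : ∀ k, t ^ (k + 1) ≠ 1 := fun k => (pow_lt_one₀ ht0.le ht1 k.succ_ne_zero).ne
  change ∑ σ, hallLittlewoodTerm (fun i : Fin n => u * t ^ (i : ℕ)) t lam σ = _
  rw [sum_hallLittlewoodTerm_geometric, hallLittlewoodTerm]
  simp only [Equiv.Perm.coe_one, id_eq]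
  rw [prod_geometric_pow, prod_pairs_geometric hu ht0.ne' ht, mul_div_assoc]

/-- Principal specialization of the Hall–Littlewood polynomial via its symmetrization
formula: for `n ≥ 1`, `0 < t < 1`, `u ≠ 0`, a partition `λ` of length `≤ n`
(a weakly decreasing function `Fin n → ℕ`), and `x_i = u t^{i−1}` (0-indexed: `u t^i`),
`Σ_{σ ∈ S_n} ∏_i x_{σ(i)}^{λ_i} ∏_{i<j} (x_{σ(i)} − t x_{σ(j)})/(x_{σ(i)} − x_{σ(j)})
  = u^{|λ|} t^{n(λ)} (t;t)_n / (1−t)^n`,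
where `|λ| = Σ λ_i`, `n(λ) = Σ (i−1)λ_i` and `(t;t)_n = ∏_{i=1}^n (1−t^i)`. -/
theorem hall_littlewood_principal_specialization
    (n : ℕ) (hn : 1 ≤ n) (t u : ℝ) (ht0 : 0 < t) (ht1 : t < 1) (hu : u ≠ 0)
    (lam : Fin n → ℕ) (hlam : Antitone lam) :
    ∑ σ : Equiv.Perm (Fin n),
      (∏ i : Fin n, (u * t ^ (σ i : ℕ)) ^ lam i) *
        ∏ p ∈ Finset.univ.filter (fun p : Fin n × Fin n => p.1 < p.2),
          (u * t ^ (σ p.1 : ℕ) - t * (u * t ^ (σ p.2 : ℕ))) /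
            (u * t ^ (σ p.1 : ℕ) - u * t ^ (σ p.2 : ℕ))
    = u ^ (∑ i : Fin n, lam i) * t ^ (∑ i : Fin n, (i : ℕ) * lam i) *
        (∏ i ∈ Finset.range n, (1 - t ^ (i + 1))) / (1 - t) ^ n :=
  hall_littlewood_principal_specialization_general n t u ht0 ht1 hu lam
end

section
/- The covariance function C(d) = ∫_0^∞ y² e^{−y² − d·y} dy of the limiting bulk fluctuation process satisfies lim_{d→∞} d³ · C(d) = 2; in particular the correlations Cov(R_s, R_{s+d}) = C(|d|) decay like 2·|d|^{−3} as |d| → ∞ and remain bounded as d → 0. -/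
/-!
Laplace's method at the scale `y ≈ 1/d`: there the Gaussian factor `e^{-y²}` is close to `1`.
Precisely, `1 - y² ≤ e^{-y²} ≤ 1`, and `∫_0^∞ yⁿ e^{-dy} dy = n!/dⁿ⁺¹` turns this into
`2/d³ - 24/d⁵ ≤ C(d) ≤ 2/d³`, which squeezes `d³ C(d)` to `2`.
-/

open MeasureTheory Filter Real Set Topology

section PowMulExpNegMul

variable {d : ℝ}

lemma integral_pow_mul_exp_neg_mul_Ioi (n : ℕ) (hd : 0 < d) :
    ∫ y in Ioi (0 : ℝ), y ^ n * exp (-(d * y)) = n.factorial / d ^ (n + 1) := by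
  have h := integral_rpow_mul_exp_neg_mul_Ioi (a := (n : ℝ) + 1) (by positivity) hd
  rw [add_sub_cancel_right, Gamma_nat_eq_factorial, ← Nat.cast_succ, rpow_natCast, one_div_pow,
    one_div_mul_eq_div] at h
  rw [← h]
  refine setIntegral_congr_fun measurableSet_Ioi fun y _ => ?_
  simp only [rpow_natCast]

lemma integrableOn_pow_mul_exp_neg_mul_Ioi (n : ℕ) (hd : 0 < d) :
    IntegrableOn (fun y : ℝ => y ^ n * exp (-(d * y))) (Ioi 0) := by
  refine (integrableOn_rpow_mul_exp_neg_mul_rpow (p := 1) (s := n)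
    (neg_one_lt_zero.trans_le n.cast_nonneg) one_pos hd).congr_fun (fun y _ => ?_)
    measurableSet_Ioi
  simp only [rpow_one, rpow_natCast, neg_mul]

end PowMulExpNegMul

noncomputable def bulkCovariance (d : ℝ) : ℝ :=
  ∫ y in Ioi (0 : ℝ), y ^ 2 * exp (-y ^ 2 - d * y)

section BulkCovariance

variable {d : ℝ}

lemma bulkCovariance_integrand_eq (d y : ℝ) :
    y ^ 2 * exp (-y ^ 2 - d * y) = exp (-y ^ 2) * (y ^ 2 * exp (-(d * y))) := by
  rw [sub_eq_add_neg, exp_add]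
  ring

lemma integrableOn_bulkCovariance_integrand (hd : 0 < d) :
    IntegrableOn (fun y : ℝ => y ^ 2 * exp (-y ^ 2 - d * y)) (Ioi 0) := by
  refine (integrableOn_pow_mul_exp_neg_mul_Ioi 2 hd).mono' (by fun_prop) ?_
  refine ae_of_all _ fun y => ?_
  rw [bulkCovariance_integrand_eq, norm_mul, norm_of_nonneg (exp_pos _).le,
    norm_of_nonneg (by positivity)]
  exact mul_le_of_le_one_left (by positivity) (exp_le_one_iff.mpr (by nlinarith))

lemma bulkCovariance_le (hd : 0 < d) : bulkCovariance d ≤ 2 / d ^ 3 := by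
  have h := integral_pow_mul_exp_neg_mul_Ioi 2 hd
  norm_num at h
  rw [← h]
  refine setIntegral_mono_on (integrableOn_bulkCovariance_integrand hd)
    (integrableOn_pow_mul_exp_neg_mul_Ioi 2 hd) measurableSet_Ioi fun y _ => ?_
  rw [bulkCovariance_integrand_eq]
  exact mul_le_of_le_one_left (by positivity) (exp_le_one_iff.mpr (by nlinarith))

lemma le_bulkCovariance (hd : 0 < d) : 2 / d ^ 3 - 24 / d ^ 5 ≤ bulkCovariance d := by
  have h2 := integral_pow_mul_exp_neg_mul_Ioi 2 hd
  have h4 := integral_pow_mul_exp_neg_mul_Ioi 4 hd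
  norm_num [Nat.factorial] at h2 h4
  rw [← h2, ← h4, ← integral_sub (integrableOn_pow_mul_exp_neg_mul_Ioi 2 hd)
    (integrableOn_pow_mul_exp_neg_mul_Ioi 4 hd)]
  refine setIntegral_mono_on ((integrableOn_pow_mul_exp_neg_mul_Ioi 2 hd).sub
    (integrableOn_pow_mul_exp_neg_mul_Ioi 4 hd)) (integrableOn_bulkCovariance_integrand hd)
    measurableSet_Ioi fun y _ => ?_
  have h_exp : 1 - y ^ 2 ≤ exp (-y ^ 2) := by linarith [add_one_le_exp (-y ^ 2)]
  calc y ^ 2 * exp (-(d * y)) - y ^ 4 * exp (-(d * y))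
      = (1 - y ^ 2) * (y ^ 2 * exp (-(d * y))) := by ring
    _ ≤ exp (-y ^ 2) * (y ^ 2 * exp (-(d * y))) := by gcongr
    _ = y ^ 2 * exp (-y ^ 2 - d * y) := (bulkCovariance_integrand_eq d y).symm

end BulkCovariance

/-- Cubic decay of the bulk covariance function: the covariance
`C(d) = ∫_0^∞ y² e^{−y² − dy} dy` of the limiting bulk fluctuation process satisfies
`lim_{d→∞} d³ C(d) = 2`. -/
theorem bulk_covariance_cubic_decay :
    Tendsto
      (fun d : ℝ => d ^ 3 * ∫ y in Set.Ioi (0 : ℝ), y ^ 2 * Real.exp (-y ^ 2 - d * y))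
      atTop (nhds 2) := by
  change Tendsto (fun d => d ^ 3 * bulkCovariance d) atTop (𝓝 2)
  have h_lower : Tendsto (fun d : ℝ => 2 - 24 / d ^ 2) atTop (𝓝 2) := by
    simpa using (tendsto_const_nhds (x := (2 : ℝ))).sub
      (tendsto_const_nhds.div_atTop (tendsto_pow_atTop two_ne_zero))
  refine tendsto_of_tendsto_of_tendsto_of_le_of_le' h_lower tendsto_const_nhds ?_ ?_
  · filter_upwards [eventually_gt_atTop (0 : ℝ)] with d hd
    calc 2 - 24 / d ^ 2 = d ^ 3 * (2 / d ^ 3 - 24 / d ^ 5) := by field_simp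
      _ ≤ d ^ 3 * bulkCovariance d := by gcongr; exact le_bulkCovariance hd
  · filter_upwards [eventually_gt_atTop (0 : ℝ)] with d hd
    calc d ^ 3 * bulkCovariance d ≤ d ^ 3 * (2 / d ^ 3) := by gcongr; exact bulkCovariance_le hd
      _ = 2 := by field_simp
end
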